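/- arXiv:1706.00661 — 3 statements merged into one kernel-verified Lean document; each statement's English description precedes it below -/
import Mathlib

section
/- (Gale–Stewart) Every closed subset A of Baire space ℕ^ℕ gives a determined game: in the two-player game where players I and II alternately choose natural numbers producing x ∈ ℕ^ℕ, with I winning iff x ∈ A, one of the two players has a winning strategy. -/
/-!
If II has no winning strategy from the current position, then either it is I's turn and some
move of I keeps II without one, or it is II's turn and no move of II gives II one. So I can play
forever into positions from which II cannot win. A play that leaves the closed set `A` does so
at a finite stage, and from that stage on II wins by doing anything; hence I's play stays in `A`.
-/

open PiNat

namespace GaleStewart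

variable {α : Type*}

def position (x : ℕ → α) (k : ℕ) : List α := List.ofFn fun i : Fin k => x i

@[simp]
lemma length_position (x : ℕ → α) (k : ℕ) : (position x k).length = k :=
  List.length_ofFn

lemma position_zero (x : ℕ → α) : position x 0 = [] :=
  List.ofFn_zero

lemma position_succ (x : ℕ → α) (k : ℕ) : position x (k + 1) = position x k ++ [x k] := by
  rw [position, List.ofFn_succ']
  simp [position, Fin.castSucc]

lemma position_eq_position_iff {x y : ℕ → α} {k : ℕ} :
    position y k = position x k ↔ y ∈ cylinder x k := by
  simp [position, mem_cylinder_iff, funext_iff, Fin.forall_iff]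

lemma getD_position {x : ℕ → α} {j k : ℕ} (h : j < k) (d : α) :
    (position x k).getD j d = x j := by
  simp [position, h]

/-- Player II has a strategy that wins every play extending the position `p`. -/
def SecondPlayerWins (A : Set (ℕ → α)) (p : List α) : Prop :=
  ∃ τ : List α → α, ∀ x : ℕ → α, position x p.length = p →
    (∀ n, p.length ≤ 2 * n + 1 → x (2 * n + 1) = τ (position x (2 * n + 1))) → x ∉ A

variable {A : Set (ℕ → α)} {p : List α}

lemma SecondPlayerWins.of_forall_append [Nonempty α]
    (h : ∀ a, SecondPlayerWins A (p ++ [a])) : SecondPlayerWins A p := by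
  choose τ hτ using h
  -- II reads off the move played at `p` and follows the corresponding winning strategy.
  refine ⟨fun q => τ (q.getD p.length (Classical.arbitrary α)) q, fun x hx hxτ => ?_⟩
  refine hτ (x p.length) x (by simp [position_succ, hx]) fun n hn => ?_
  simp only [List.length_append, List.length_singleton] at hn
  simp only [hxτ n (by omega), getD_position (show p.length < 2 * n + 1 by omega)]

lemma SecondPlayerWins.of_append_of_odd (hp : Odd p.length) {a : α}
    (h : SecondPlayerWins A (p ++ [a])) : SecondPlayerWins A p := by
  obtain ⟨τ, hτ⟩ := h
  obtain ⟨m, hm⟩ := hp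
  refine ⟨fun q => if q.length = p.length then a else τ q, fun x hx hxτ => ?_⟩
  have hxa : x p.length = a := by simpa [hm] using hxτ m (by omega)
  refine hτ x (by simp [position_succ, hx, hxa]) fun n hn => ?_
  simp only [List.length_append, List.length_singleton] at hn
  simpa [show 2 * n + 1 ≠ p.length by omega] using hxτ n (by omega)

lemma exists_secondPlayerWins_position [TopologicalSpace α] [DiscreteTopology α]
    (hA : IsClosed A) {x : ℕ → α} (hx : x ∉ A) : ∃ N, SecondPlayerWins A (position x N) := by
  obtain ⟨N, hN⟩ := exists_disjoint_cylinder hA hx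
  refine ⟨N, ⟨fun _ => x 0, fun y hy _ hyA => ?_⟩⟩
  rw [length_position, position_eq_position_iff] at hy
  exact Set.disjoint_left.mp hN hyA hy

/-- A move of I after which II still has no winning strategy, if there is one. -/
noncomputable def survivingMove [Nonempty α] (A : Set (ℕ → α)) (p : List α) : α :=
  Classical.epsilon fun a => ¬SecondPlayerWins A (p ++ [a])

lemma not_secondPlayerWins_position [Nonempty α] (h₀ : ¬SecondPlayerWins A []) {x : ℕ → α}
    (hx : ∀ n, x (2 * n) = survivingMove A (position x (2 * n))) (k : ℕ) :
    ¬SecondPlayerWins A (position x k) := by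
  induction k with
  | zero => rwa [position_zero]
  | succ k ih =>
    rw [position_succ]
    rcases Nat.even_or_odd' k with ⟨m, rfl | rfl⟩
    · have hmove : ∃ a, ¬SecondPlayerWins A (position x (2 * m) ++ [a]) := by
        by_contra! hall
        exact ih (.of_forall_append hall)
      rw [hx m]
      exact Classical.epsilon_spec hmove
    · exact fun hII => ih (.of_append_of_odd (by simp) hII)

end GaleStewart

open GaleStewart in
/-- Gale–Stewart: every closed game on `ℕ` is determined.  Players I and II
alternately choose naturals (I at even stages, II at odd stages), producing
`x : ℕ → ℕ`; I wins iff `x ∈ A`.  A strategy is a function from finite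
positions to `ℕ`.  If `A` is closed, one of the players has a winning
strategy. -/
theorem gale_stewart_closed (A : Set (ℕ → ℕ)) (hA : IsClosed A) :
    (∃ σ : List ℕ → ℕ, ∀ x : ℕ → ℕ,
        (∀ n, x (2 * n) = σ (List.ofFn fun i : Fin (2 * n) => x i)) → x ∈ A) ∨
    (∃ τ : List ℕ → ℕ, ∀ x : ℕ → ℕ,
        (∀ n, x (2 * n + 1) = τ (List.ofFn fun i : Fin (2 * n + 1) => x i)) → x ∉ A) := by
  by_cases h₀ : SecondPlayerWins A []
  · obtain ⟨τ, hτ⟩ := h₀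
    exact .inr ⟨τ, fun x hx => hτ x (position_zero x) fun n _ => hx n⟩
  · refine .inl ⟨survivingMove A, fun x hx => ?_⟩
    by_contra hxA
    obtain ⟨N, hN⟩ := exists_secondPlayerWins_position hA hxA
    exact not_secondPlayerWins_position h₀ hx N hN
end

section
/- (Kunen–Martin) Let κ be an infinite cardinal and let R ⊆ ℕ^ℕ × ℕ^ℕ be a wellfounded relation that is κ-Suslin, i.e. R = p[T] for some tree T on (ω×ω)×κ. Then the rank of R is strictly less than κ⁺. -/
/-!
Consider the tree of attempts to build a descending `R`-chain `x₀ ← x₁ ← x₂ ← ⋯` together with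
branches of `T` witnessing each step: a node of level `m` records the first `m` values of
`x₀, …, xₘ` and of the witnesses, and a step goes one level up. Since `T` is a tree on `κ`, there
are only `κ` nodes; the tree is wellfounded because an infinite ascent converges to an infinite
descending `R`-chain. Extending a chain ending in `x` by an `R`-predecessor of `x` is a step up,
so by induction the `R`-rank of `x` is at most the rank of the level-`0` node of `x`. Finally, the
ranks of a wellfounded relation on a set of size `κ` form an initial segment of the ordinals of
size at most `κ`, hence are bounded below `κ⁺`.
-/

open Cardinal Order Set

universe u

theorem WellFounded.iSup_succ_rank_lt_ord_succ_card {β : Type u} {r : β → β → Prop}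
    (hwf : WellFounded r) : ⨆ a, succ (hwf.apply a).rank < (succ #β).ord := by
  set o := ⨆ a, succ (hwf.apply a).rank
  have hranks : Iio o ⊆ range fun a => (hwf.apply a).rank := by
    intro b hb
    obtain ⟨a, hba⟩ := Ordinal.lt_iSup_iff.1 hb
    obtain ⟨c, hc, rfl⟩ := (hwf.apply a).mem_range_rank_of_le (lt_succ_iff.1 hba)
    exact ⟨c, rfl⟩
  have hcard : lift o.card ≤ lift #β := by
    have hrange := mk_range_le_lift (f := fun a => (hwf.apply a).rank)
    rw [lift_id'.{u, u + 1}] at hrange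
    rw [← mk_Iio_ordinal]
    exact (mk_le_mk_of_subset hranks).trans hrange
  exact lt_ord.2 ((lift_le.1 hcard).trans_lt (lt_succ _))

theorem exists_eqOn_of_eqOn_succ {γ β : Type*} {D : ℕ → Set γ} (hD : Monotone D)
    (hcover : ∀ p, ∃ k, p ∈ D k) (f : ℕ → γ → β) (hf : ∀ k, EqOn (f (k + 1)) (f k) (D k)) :
    ∃ g : γ → β, ∀ k, EqOn g (f k) (D k) := by
  have hcoh : ∀ k l, k ≤ l → EqOn (f l) (f k) (D k) := by
    intro k l hkl
    induction l, hkl using Nat.le_induction with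
    | base => exact fun _ _ => rfl
    | succ l hkl ih => exact fun p hp => (hf l (hD hkl hp)).trans (ih hp)
  choose K hK using hcover
  refine ⟨fun p => f (K p) p, fun k p hp => ?_⟩
  rcases le_total k (K p) with h | h
  · exact hcoh k (K p) h hp
  · exact (hcoh (K p) k h (hK p)).symm

section Trees

variable {α β : Type*}

def prefixList (f : ℕ → α) (n : ℕ) : List α := List.ofFn fun i : Fin n => f i

theorem prefixList_take (f : ℕ → α) {m n : ℕ} (h : n ≤ m) :
    (prefixList f m).take n = prefixList f n :=
  List.ext_getElem (by simp [prefixList, h]) fun i _ _ => by simp [prefixList]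

theorem prefixList_inj {f g : ℕ → α} {n : ℕ} :
    prefixList f n = prefixList g n ↔ ∀ j < n, f j = g j := by
  simp only [prefixList, List.ofFn_inj, funext_iff, Fin.forall_iff]

theorem map_prefixList (φ : α → β) (f : ℕ → α) (n : ℕ) :
    (prefixList f n).map φ = prefixList (φ ∘ f) n :=
  List.map_ofFn ..

def TakeClosed (T : Set (List ℕ × List ℕ × List α)) : Prop :=
  ∀ p ∈ T, ∀ k, (p.1.take k, p.2.1.take k, p.2.2.take k) ∈ T

def IsBranch (T : Set (List ℕ × List ℕ × List α)) (x y : ℕ → ℕ) (f : ℕ → α) : Prop :=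
  ∀ n, (prefixList x n, prefixList y n, prefixList f n) ∈ T

def treeProj (T : Set (List ℕ × List ℕ × List α)) : Set ((ℕ → ℕ) × (ℕ → ℕ)) :=
  {xy | ∃ f, IsBranch T xy.1 xy.2 f}

def treeComap (φ : α → β) (T : Set (List ℕ × List ℕ × List β)) :
    Set (List ℕ × List ℕ × List α) :=
  {p | (p.1, p.2.1, p.2.2.map φ) ∈ T}

theorem TakeClosed.comap {T : Set (List ℕ × List ℕ × List β)} (hT : TakeClosed T)
    (φ : α → β) : TakeClosed (treeComap φ T) := fun p hp k => by
  simpa [treeComap, List.map_take] using hT _ hp k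

theorem treeProj_comap {T : Set (List ℕ × List ℕ × List β)} {φ : α → β}
    (hφ : ∀ p ∈ T, ∀ b ∈ p.2.2, b ∈ range φ) : treeProj (treeComap φ T) = treeProj T := by
  ext ⟨x, y⟩
  constructor
  · rintro ⟨f, hf⟩
    refine ⟨φ ∘ f, fun n => ?_⟩
    simpa [treeComap, map_prefixList] using hf n
  · rintro ⟨f, hf⟩
    have hrange : ∀ i, f i ∈ range φ := fun i =>
      hφ _ (hf (i + 1)) _ (List.mem_ofFn.2 ⟨⟨i, i.lt_succ_self⟩, rfl⟩)
    choose g hg using hrange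
    refine ⟨g, fun n => ?_⟩
    have hfg : φ ∘ g = f := funext hg
    simpa [treeComap, map_prefixList, hfg] using hf n

end Trees

section ApproxTree

variable {α : Type} {T : Set (List ℕ × List ℕ × List α)}

def IsBranchChain (T : Set (List ℕ × List ℕ × List α)) (k : ℕ) (c : ℕ → ℕ → ℕ)
    (w : ℕ → ℕ → α) : Prop :=
  ∀ i < k, IsBranch T (c (i + 1)) (c i) (w i)

def approxNode (m : ℕ) (c : ℕ → ℕ → ℕ) (w : ℕ → ℕ → α) : List (List ℕ) × List (List α) :=
  (List.ofFn fun i : Fin (m + 1) => prefixList (c i) m,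
    List.ofFn fun i : Fin m => prefixList (w i) m)

def IsApprox (T : Set (List ℕ × List ℕ × List α)) (m : ℕ) (c : ℕ → ℕ → ℕ)
    (w : ℕ → ℕ → α) : Prop :=
  ∀ i < m, (prefixList (c (i + 1)) m, prefixList (c i) m, prefixList (w i) m) ∈ T

def ApproxStep (T : Set (List ℕ × List ℕ × List α))
    (t s : List (List ℕ) × List (List α)) : Prop :=
  ∃ m c w, IsApprox T (m + 1) c w ∧ t = approxNode (m + 1) c w ∧ s = approxNode m c w

theorem approxNode_eq_approxNode_iff {m : ℕ} {c c' : ℕ → ℕ → ℕ} {w w' : ℕ → ℕ → α} :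
    approxNode m c w = approxNode m c' w' ↔
      (∀ i ≤ m, ∀ j < m, c i j = c' i j) ∧ ∀ i < m, ∀ j < m, w i j = w' i j := by
  simp only [approxNode, Prod.mk.injEq, List.ofFn_inj, funext_iff, Fin.forall_iff,
    prefixList_inj, Nat.lt_succ_iff]

theorem level_eq_of_approxNode_eq {m m' : ℕ} {c c' : ℕ → ℕ → ℕ} {w w' : ℕ → ℕ → α}
    (h : approxNode m c w = approxNode m' c' w') : m = m' := by
  simpa [approxNode] using congrArg (fun s => s.2.length) h

theorem IsBranchChain.isApprox {k : ℕ} {c : ℕ → ℕ → ℕ} {w : ℕ → ℕ → α}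
    (h : IsBranchChain T k c w) : IsApprox T k c w :=
  fun i hi => h i hi k

theorem IsBranchChain.update {k : ℕ} {c : ℕ → ℕ → ℕ} {w : ℕ → ℕ → α}
    (h : IsBranchChain T k c w) {y : ℕ → ℕ} {f : ℕ → α} (hy : IsBranch T y (c k) f) :
    IsBranchChain T (k + 1) (Function.update c (k + 1) y) (Function.update w k f) := by
  intro i hi
  rcases (Nat.lt_succ_iff.1 hi).lt_or_eq with hi | rfl
  · rw [Function.update_of_ne (by omega : i + 1 ≠ k + 1),
      Function.update_of_ne (by omega : i ≠ k + 1), Function.update_of_ne (by omega : i ≠ k)]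
    exact h i hi
  · simpa using hy

theorem approxNode_update (k : ℕ) (c : ℕ → ℕ → ℕ) (w : ℕ → ℕ → α) (y : ℕ → ℕ)
    (f : ℕ → α) :
    approxNode k (Function.update c (k + 1) y) (Function.update w k f) = approxNode k c w :=
  approxNode_eq_approxNode_iff.2
    ⟨fun i hi _ _ => by rw [Function.update_of_ne (by omega)],
     fun i hi _ _ => by rw [Function.update_of_ne hi.ne]⟩

theorem rank_le_rank_approxNode (hwf : WellFounded fun x y => (x, y) ∈ treeProj T)
    (hS : WellFounded (ApproxStep T)) {k : ℕ} {c : ℕ → ℕ → ℕ} {w : ℕ → ℕ → α}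
    (hc : IsBranchChain T k c w) :
    (hwf.apply (c k)).rank ≤ (hS.apply (approxNode k c w)).rank := by
  generalize hx : c k = x
  induction x using hwf.induction generalizing k c w with
  | _ x IH =>
    rw [Acc.rank_eq]
    refine Ordinal.iSup_le fun ⟨y, f, hf⟩ => ?_
    let c' := Function.update c (k + 1) y
    let w' := Function.update w k f
    have hc' : IsBranchChain T (k + 1) c' w' := hc.update (hx ▸ hf)
    have hstep : ApproxStep T (approxNode (k + 1) c' w') (approxNode k c w) :=
      ⟨k, c', w', hc'.isApprox, rfl, (approxNode_update k c w y f).symm⟩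
    calc succ (hwf.apply y).rank ≤ succ (hS.apply (approxNode (k + 1) c' w')).rank :=
          succ_le_succ (IH y ⟨f, hf⟩ hc' (Function.update_self ..))
      _ ≤ _ := succ_le_of_lt (Acc.rank_lt_of_rel _ hstep)

theorem exists_limit_of_approxNode_succ {m : ℕ → ℕ} {c : ℕ → ℕ → ℕ → ℕ}
    {w : ℕ → ℕ → ℕ → α} (hk : ∀ k, k ≤ m k)
    (h : ∀ k, approxNode (m (k + 1)) (c (k + 1)) (w (k + 1)) = approxNode (m k + 1) (c k) (w k)) :
    ∃ (x : ℕ → ℕ → ℕ) (v : ℕ → ℕ → α),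
      ∀ k, ∀ i ≤ k, ∀ j ≤ k, x i j = c k i j ∧ v i j = w k i j := by
  have hagree : ∀ k, (∀ i ≤ m k + 1, ∀ j < m k + 1, c (k + 1) i j = c k i j) ∧
      ∀ i < m k + 1, ∀ j < m k + 1, w (k + 1) i j = w k i j := fun k =>
    approxNode_eq_approxNode_iff.1 (by simpa only [level_eq_of_approxNode_eq (h k)] using h k)
  have hD : Monotone fun k : ℕ => Iic k ×ˢ Iic k := fun a b hab =>
    prod_mono (Iic_subset_Iic.2 hab) (Iic_subset_Iic.2 hab)
  have hcover : ∀ p : ℕ × ℕ, ∃ k, p ∈ Iic k ×ˢ Iic k := fun p =>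
    ⟨p.1 + p.2, by simp only [mem_prod, mem_Iic]; omega⟩
  obtain ⟨x, hx⟩ := exists_eqOn_of_eqOn_succ hD hcover (fun k p => c k p.1 p.2)
    fun k p ⟨hi, hj⟩ => (hagree k).1 _ (by grind) _ (by grind)
  obtain ⟨v, hv⟩ := exists_eqOn_of_eqOn_succ hD hcover (fun k p => w k p.1 p.2)
    fun k p ⟨hi, hj⟩ => (hagree k).2 _ (by grind) _ (by grind)
  exact ⟨fun i j => x (i, j), fun i j => v (i, j), fun k i hi j hj =>
    ⟨hx k ⟨hi, hj⟩, hv k ⟨hi, hj⟩⟩⟩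

theorem wellFounded_approxStep (hT : TakeClosed T)
    (hwf : WellFounded fun x y => (x, y) ∈ treeProj T) : WellFounded (ApproxStep T) := by
  rw [wellFounded_iff_isEmpty_descending_chain]
  refine ⟨fun ⟨g, hg⟩ => ?_⟩
  choose m c w hgood hnext hcur using hg
  have hlink : ∀ k, approxNode (m (k + 1)) (c (k + 1)) (w (k + 1)) =
      approxNode (m k + 1) (c k) (w k) := fun k => (hcur (k + 1)).symm.trans (hnext k)
  have hk : ∀ k, k ≤ m k := fun k => by
    induction k with
    | zero => exact Nat.zero_le _
    | succ k ih => rw [level_eq_of_approxNode_eq (hlink k)]; omega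
  obtain ⟨x, v, hxv⟩ := exists_limit_of_approxNode_succ hk hlink
  have hbranch : ∀ i, IsBranch T (x (i + 1)) (x i) (v i) := fun i n => by
    set K := i + n + 1
    have hnK : n ≤ m K + 1 := by have := hk K; omega
    have hK := hT _ (hgood K i (by have := hk K; omega)) n
    simp only [prefixList_take _ hnK] at hK
    have hx : ∀ i' ≤ K, prefixList (x i') n = prefixList (c K i') n := fun i' hi' =>
      prefixList_inj.2 fun j hj => (hxv K i' hi' j (by omega)).1
    have hv : prefixList (v i) n = prefixList (w K i) n :=
      prefixList_inj.2 fun j hj => (hxv K i (by omega) j (by omega)).2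
    rwa [hx _ (by omega), hx _ (by omega), hv]
  exact (wellFounded_iff_isEmpty_descending_chain.1 hwf).false ⟨x, fun i => ⟨v i, hbranch i⟩⟩

theorem mk_approxNode_le (α : Type) : #(List (List ℕ) × List (List α)) ≤ max ℵ₀ #α := by
  rw [mk_prod, lift_id, lift_id]
  calc #(List (List ℕ)) * #(List (List α)) ≤ ℵ₀ * max ℵ₀ #α :=
        mul_le_mul' mk_le_aleph0 <|
          (mk_list_le_max _).trans <| max_le (le_max_left _ _) (mk_list_le_max α)
    _ = max ℵ₀ #α := aleph0_mul_eq (le_max_left _ _)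

theorem iSup_succ_rank_lt_of_eq_treeProj [Nonempty α] (hT : TakeClosed T)
    {R : Set ((ℕ → ℕ) × (ℕ → ℕ))} (hR : R = treeProj T)
    (hwf : WellFounded fun x y => (x, y) ∈ R) :
    ⨆ x, succ (hwf.apply x).rank < (succ (max ℵ₀ #α)).ord := by
  subst hR
  have hS := wellFounded_approxStep hT hwf
  calc ⨆ x, succ (hwf.apply x).rank ≤ ⨆ s, succ (hS.apply s).rank :=
        Ordinal.iSup_le fun x => (succ_le_succ (rank_le_rank_approxNode hwf hS
          (k := 0) (c := fun _ => x) (w := fun _ _ => Classical.arbitrary α) nofun)).trans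
          (Ordinal.le_iSup _ _)
    _ < (succ #(List (List ℕ) × List (List α))).ord := hS.iSup_succ_rank_lt_ord_succ_card
    _ ≤ (succ (max ℵ₀ #α)).ord := ord_le_ord.2 (succ_le_succ (mk_approxNode_le α))

end ApproxTree

/-- Kunen–Martin: if `R ⊆ ℕ^ℕ × ℕ^ℕ` is a wellfounded relation which is
`κ`-Suslin, i.e. `R = p[T]` for a tree `T` on `(ω × ω) × κ`, then the rank of
`R` (the supremum of `rank(x) + 1`) is strictly less than `κ⁺`. -/
theorem kunen_martin (κ : Cardinal) (hκ : Cardinal.aleph0 ≤ κ)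
    (T : Set (List ℕ × List ℕ × List Ordinal))
    (hT₁ : ∀ p ∈ T, p.1.length = p.2.1.length ∧ p.1.length = p.2.2.length ∧
      ∀ o ∈ p.2.2, o < κ.ord)
    (hT₂ : ∀ p ∈ T, ∀ k, (p.1.take k, p.2.1.take k, p.2.2.take k) ∈ T)
    (R : Set ((ℕ → ℕ) × (ℕ → ℕ)))
    (hR : R = {xy | ∃ f : ℕ → Ordinal, ∀ n : ℕ,
      ((List.ofFn fun i : Fin n => xy.1 i), (List.ofFn fun i : Fin n => xy.2 i),
        (List.ofFn fun i : Fin n => f i)) ∈ T})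
    (hwf : WellFounded (fun x y : ℕ → ℕ => (x, y) ∈ R)) :
    (⨆ x : ℕ → ℕ, Order.succ ((hwf.apply x).rank)) < (Order.succ κ).ord := by
  -- Relabel `T` by `κ.ord.ToType`, a type of size `κ` in `Type`, so that the approximation
  -- nodes form a type of size `κ` whose ranks are comparable with those of `R`.
  let φ : κ.ord.ToType → Ordinal := fun a => (Ordinal.ToType.toOrd a).1
  have hφ : ∀ p ∈ T, ∀ o ∈ p.2.2, o ∈ range φ := fun p hp o ho =>
    ⟨Ordinal.ToType.mk ⟨o, (hT₁ p hp).2.2 o ho⟩, by simp [φ]⟩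
  have : Nonempty κ.ord.ToType :=
    Ordinal.nonempty_toType_iff.2 (ord_eq_zero.not.2 (aleph0_pos.trans_le hκ).ne')
  simpa [max_eq_right hκ] using iSup_succ_rank_lt_of_eq_treeProj (TakeClosed.comap hT₂ φ)
    (hR.trans (treeProj_comap hφ).symm) hwf
end

section
/- The map ξ ↦ ξ̂ is strictly increasing on the interval (0, ω^{ω^ω}), and ω ≤ ξ̂ < ω_ω for all 0 < ξ < ω^{ω^ω}. -/
/-- The hat of a monomial: `(ω^η)^ := u_{n₁+1}·…·u_{n_k+1}` where
`η = ω^{n₁} + … + ω^{n_k}` in Cantor normal form (`u_n` being the `n`-th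
uncountable initial ordinal), and `(ω^0)^ = 1̂ = ω`. -/
noncomputable def hatMono (η : Ordinal) : Ordinal :=
  if η = 0 then Ordinal.omega0
  else ((Ordinal.CNF Ordinal.omega0 η).map
    fun p => ((Cardinal.aleph (p.1 + 1)).ord) ^ p.2).foldr (· * ·) 1

/-- The hat operation `ξ ↦ ξ̂`: if `ξ = ω^{η₁} + … + ω^{η_m}` in Cantor normal
form then `ξ̂ = (ω^{η₁})^ + … + (ω^{η_m})^`. -/
noncomputable def hatFn (ξ : Ordinal) : Ordinal :=
  ((Ordinal.CNF Ordinal.omega0 ξ).map fun p => hatMono p.1 * p.2).foldr (· + ·) 0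

/-!
Replacing the exponents of a Cantor normal form by their images under a strictly increasing `g`,
`Σ ω^{ηᵢ}·cᵢ ↦ Σ ω^{g ηᵢ}·cᵢ`, is strictly increasing: normal forms compare lexicographically, and
everything below the leading term `ω^{η}·c` is sent below `ω^{g η}`.

The hat map is such a substitution twice over. Each `u_{n+1}` is an ε-number, so for
`η = Σ ω^{nᵢ}·cᵢ` we get `(ω^η)^ = ∏ u_{nᵢ+1}^{cᵢ} = ω^{e η}` with `e η = 1 + Σ ω^{u_{nᵢ+1}}·cᵢ`,
a substitution into the normal form of `η` (the `1 +` only matters at `η = 0`). Hence `ξ̂ = Σ ω^{e ηᵢ}·cᵢ` is strictly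
increasing, at least `ω^{e 0} = ω`, and below the ε-number `ω_ω` because for `η < ω^n` the
exponent `e η` stays below `u_{n+1}`.
-/

open Ordinal Cardinal

/-- `cnfSubst g (ω^{η₁}·c₁ + … + ω^{ηₘ}·cₘ) = ω^{g η₁}·c₁ + … + ω^{g ηₘ}·cₘ` for a Cantor
normal form. -/
noncomputable def cnfSubst (g : Ordinal → Ordinal) (ξ : Ordinal) : Ordinal :=
  ((CNF ω ξ).map fun p => ω ^ g p.1 * p.2).foldr (· + ·) 0

section cnfSubst

variable {g : Ordinal → Ordinal} {ξ : Ordinal}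

@[simp]
theorem cnfSubst_zero (g : Ordinal → Ordinal) : cnfSubst g 0 = 0 := by
  simp [cnfSubst, CNF.zero_right]

theorem cnfSubst_of_ne_zero (g : Ordinal → Ordinal) (h : ξ ≠ 0) :
    cnfSubst g ξ = ω ^ g (log ω ξ) * (ξ / ω ^ log ω ξ) + cnfSubst g (ξ % ω ^ log ω ξ) := by
  rw [cnfSubst, CNF.ne_zero h, List.map_cons, List.foldr_cons]; rfl

theorem opow_le_cnfSubst (g : Ordinal → Ordinal) (h : ξ ≠ 0) : ω ^ g (log ω ξ) ≤ cnfSubst g ξ := by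
  rw [cnfSubst_of_ne_zero g h]
  calc ω ^ g (log ω ξ) ≤ ω ^ g (log ω ξ) * (ξ / ω ^ log ω ξ) :=
        le_mul_left _ (div_opow_log_pos ω h)
    _ ≤ _ := le_self_add

theorem cnfSubst_lt_omega0_opow {b : Ordinal} (hb : ∀ η ≤ log ω ξ, g η < b) :
    cnfSubst g ξ < ω ^ b := by
  induction ξ using WellFoundedLT.induction with
  | _ ξ IH =>
    rcases eq_or_ne ξ 0 with rfl | hξ
    · simpa using opow_pos b omega0_pos
    rw [cnfSubst_of_ne_zero g hξ]
    apply isPrincipal_add_omega0_opow b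
    · exact opow_mul_lt_opow (div_opow_log_lt ξ one_lt_omega0) (hb _ le_rfl)
    · exact IH _ (mod_opow_log_lt_self ω hξ) fun η hη =>
        hb η (hη.trans (log_mono_right _ (mod_le _ _)))

theorem cnfSubst_lt_of_lt_opow (hg : StrictMono g) {l : Ordinal} (h : ξ < ω ^ l) :
    cnfSubst g ξ < ω ^ g l := by
  rcases eq_or_ne ξ 0 with rfl | hξ
  · simpa using opow_pos (g l) omega0_pos
  have hlog : log ω ξ < l := (lt_opow_iff_log_lt one_lt_omega0 hξ).1 h
  exact cnfSubst_lt_omega0_opow fun η hη => hg (hη.trans_lt hlog)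

theorem cnfSubst_strictMono (hg : StrictMono g) : StrictMono (cnfSubst g) := by
  intro ξ ζ hξζ
  induction ζ using WellFoundedLT.induction generalizing ξ with
  | _ ζ IH =>
    have hζ : ζ ≠ 0 := (zero_le.trans_lt hξζ).ne'
    set l := log ω ζ
    rcases lt_or_ge ξ (ω ^ l) with hξl | hlξ
    · exact (cnfSubst_lt_of_lt_opow hg hξl).trans_le (opow_le_cnfSubst g hζ)
    have hξ : ξ ≠ 0 := ((opow_pos l omega0_pos).trans_le hlξ).ne'
    have hlog : log ω ξ = l :=
      (log_mono_right ω hξζ.le).antisymm (le_log_of_opow_le one_lt_omega0 hlξ)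
    have hl : ω ^ l ≠ 0 := opow_ne_zero l omega0_ne_zero
    rw [cnfSubst_of_ne_zero g hξ, cnfSubst_of_ne_zero g hζ, hlog]
    rcases (div_le_left hξζ.le (ω ^ l)).lt_or_eq with hdiv | hdiv
    · calc ω ^ g l * (ξ / ω ^ l) + cnfSubst g (ξ % ω ^ l)
          < ω ^ g l * (ξ / ω ^ l) + ω ^ g l :=
            add_lt_add_right (cnfSubst_lt_of_lt_opow hg (mod_lt ξ hl)) _
        _ = ω ^ g l * Order.succ (ξ / ω ^ l) := by rw [Order.succ_eq_add_one, mul_add_one]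
        _ ≤ ω ^ g l * (ζ / ω ^ l) := mul_le_mul_right (Order.succ_le_of_lt hdiv) _
        _ ≤ _ := le_self_add
    · have hmod : ξ % ω ^ l < ζ % ω ^ l := by
        have := (div_add_mod ξ (ω ^ l)).trans_lt (hξζ.trans_eq (div_add_mod ζ (ω ^ l)).symm)
        rwa [hdiv, add_lt_add_iff_left] at this
      rw [hdiv]
      exact add_lt_add_right (IH _ (mod_opow_log_lt_self ω hζ) hmod) _

end cnfSubst

theorem omega0_opow_ord {c : Cardinal} (hc : ℵ₀ < c) : ω ^ c.ord = c.ord :=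
  op_eq_self_of_isPrincipal (op := (· ^ ·)) (omega0_lt_ord.2 hc) (isNormal_opow one_lt_omega0)
    (isPrincipal_opow_ord hc.le) (isSuccLimit_ord hc.le)

theorem omega0_opow_ord_aleph_add_one (o : Ordinal) : ω ^ (ℵ_ (o + 1)).ord = (ℵ_ (o + 1)).ord :=
  omega0_opow_ord (aleph0_lt_aleph.2 (add_pos_of_nonneg_of_pos zero_le one_pos))

theorem strictMono_ord_aleph_add_one : StrictMono fun o : Ordinal => (ℵ_ (o + 1)).ord :=
  fun _ _ h => ord_lt_ord.2 <| aleph_lt_aleph.2 <| by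
    simpa only [Order.succ_eq_add_one] using Order.succ_lt_succ h

theorem foldr_mul_map_opow {α : Type*} (b : Ordinal) (f c : α → Ordinal) (l : List α) :
    (l.map fun p => (b ^ f p) ^ c p).foldr (· * ·) 1 =
      b ^ (l.map fun p => f p * c p).foldr (· + ·) 0 := by
  induction l with
  | nil => simp
  | cons p l ih => simp only [List.map_cons, List.foldr_cons, ih, opow_mul, opow_add]

noncomputable def hatExponent (η : Ordinal) : Ordinal :=
  1 + cnfSubst (fun n => (ℵ_ (n + 1)).ord) η

theorem hatExponent_strictMono : StrictMono hatExponent :=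
  fun _ _ h => add_lt_add_right (cnfSubst_strictMono strictMono_ord_aleph_add_one h) 1

theorem hatMono_eq_opow (η : Ordinal) : hatMono η = ω ^ hatExponent η := by
  rcases eq_or_ne η 0 with rfl | hη
  · simp [hatMono, hatExponent]
  have hω : ω ≤ cnfSubst (fun n => (ℵ_ (n + 1)).ord) η :=
    (omega0_le_ord.2 (aleph0_le_aleph _)).trans <|
      (right_le_opow _ one_lt_omega0).trans (opow_le_cnfSubst _ hη)
  rw [hatMono, if_neg hη, hatExponent, one_add_of_omega0_le hω, cnfSubst, ← foldr_mul_map_opow]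
  congr 2
  funext p
  -- `u = ω ^ ω ^ u` for the ε-number `u = ℵ_(n+1).ord`
  rw [omega0_opow_ord_aleph_add_one, omega0_opow_ord_aleph_add_one]

theorem hatFn_eq_cnfSubst : hatFn = cnfSubst hatExponent := by
  funext ξ
  simp only [hatFn, cnfSubst, hatMono_eq_opow]

theorem hatExponent_lt_ord_aleph_omega0 {η : Ordinal} (hη : η < ω ^ ω) :
    hatExponent η < (ℵ_ ω).ord := by
  obtain ⟨n, hn, hηn⟩ := (lt_opow_of_isSuccLimit omega0_ne_zero isSuccLimit_omega0).1 hη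
  have hexp : hatExponent η < ω ^ (ℵ_ (n + 1)).ord :=
    isPrincipal_add_omega0_opow _
      (one_lt_omega0.trans_le (left_le_opow _ (ord_pos.2 (aleph_pos _))))
      (cnfSubst_lt_of_lt_opow strictMono_ord_aleph_add_one hηn)
  rw [omega0_opow_ord_aleph_add_one] at hexp
  exact hexp.trans (ord_lt_ord.2 (aleph_lt_aleph.2 (isSuccLimit_omega0.add_one_lt hn)))

/-- The map `ξ ↦ ξ̂` is strictly increasing on `(0, ω^{ω^ω})`, and
`ω ≤ ξ̂ < ω_ω` for all `0 < ξ < ω^{ω^ω}`. -/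
theorem hat_strictMono_and_bounds :
    (∀ ξ ζ : Ordinal, 0 < ξ → ξ < ζ →
        ζ < Ordinal.omega0 ^ (Ordinal.omega0 ^ Ordinal.omega0) → hatFn ξ < hatFn ζ) ∧
    (∀ ξ : Ordinal, 0 < ξ → ξ < Ordinal.omega0 ^ (Ordinal.omega0 ^ Ordinal.omega0) →
        Ordinal.omega0 ≤ hatFn ξ ∧ hatFn ξ < (Cardinal.aleph Ordinal.omega0).ord) := by
  simp only [hatFn_eq_cnfSubst]
  refine ⟨fun ξ ζ _ hξζ _ => cnfSubst_strictMono hatExponent_strictMono hξζ,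
    fun ξ hξ hξω => ⟨?_, ?_⟩⟩
  · calc ω = ω ^ (1 : Ordinal) := (opow_one ω).symm
      _ ≤ ω ^ hatExponent (log ω ξ) := opow_le_opow_right omega0_pos le_self_add
      _ ≤ cnfSubst hatExponent ξ := opow_le_cnfSubst _ hξ.ne'
  · have hlog : log ω ξ < ω ^ ω := (lt_opow_iff_log_lt one_lt_omega0 hξ.ne').1 hξω
    rw [← omega0_opow_ord (aleph0_lt_aleph.2 omega0_pos)]
    exact cnfSubst_lt_omega0_opow fun η hη => hatExponent_lt_ord_aleph_omega0 (hη.trans_lt hlog)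
end
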